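/- arXiv:0708.0907 — 6 statements merged into one kernel-verified Lean document; each statement's English description precedes it below -/
import Mathlib

section
/- Fix integers 0 = s_1 < s_2 < ... < s_k, set S = {s_1,...,s_k} and s̄ = s_k, and let n ≥ 2s̄. If T ⊆ E_C(n) is a cycle cover of C_n, then T \ Hook(n) is a legal cover of L_n. -/
/-- The number of edges of `T` ending at vertex `v`. -/
def indeg (T : Finset (ℕ × ℕ)) (v : ℕ) : ℕ := (T.filter fun e => e.2 = v).card

/-- The number of edges of `T` starting at vertex `v`. -/
def outdeg (T : Finset (ℕ × ℕ)) (v : ℕ) : ℕ := (T.filter fun e => e.1 = v).card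

/-- Edge set of the directed circulant graph `C_n` with jump set `S`:
edges `(i,j)` with `i, j ∈ {0,…,n−1}` and `(j − i) mod n ∈ S`. -/
def ECirc (S : Finset ℕ) (n : ℕ) : Finset (ℕ × ℕ) :=
  (Finset.range n ×ˢ Finset.range n).filter fun e => (e.2 + n - e.1) % n ∈ S

/-- Edge set of the lattice graph `L_n` with jump set `S`:
edges `(i,j)` with `i, j ∈ {0,…,n−1}` and `j − i ∈ S`. -/
def ELat (S : Finset ℕ) (n : ℕ) : Finset (ℕ × ℕ) :=
  (Finset.range n ×ˢ Finset.range n).filter fun e => e.1 ≤ e.2 ∧ e.2 - e.1 ∈ S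

/-- `Hook(n) = E_C(n) \ E_L(n)`. -/
def Hook (S : Finset ℕ) (n : ℕ) : Finset (ℕ × ℕ) := ECirc S n \ ELat S n

/-- `New(n) = E_L(n+1) \ E_L(n)`. -/
def NewE (S : Finset ℕ) (n : ℕ) : Finset (ℕ × ℕ) := ELat S (n + 1) \ ELat S n

/-- `T` is a cycle cover of `C_n`: `T ⊆ E_C(n)` and every vertex has in- and out-degree 1. -/
def CycleCover (S : Finset ℕ) (n : ℕ) (T : Finset (ℕ × ℕ)) : Prop :=
  T ⊆ ECirc S n ∧ ∀ v < n, indeg T v = 1 ∧ outdeg T v = 1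

/-- `T` is a legal cover of `L_n` (with `L(n) = {0,…,s̄−1}`, `R(n) = {n−s̄,…,n−1}`):
all in/out-degrees are at most 1, vertices outside `L(n)` have in-degree 1, and
vertices outside `R(n)` have out-degree 1. -/
def LegalCover (S : Finset ℕ) (sbar n : ℕ) (T : Finset (ℕ × ℕ)) : Prop :=
  T ⊆ ELat S n ∧ (∀ v < n, indeg T v ≤ 1 ∧ outdeg T v ≤ 1) ∧
    (∀ v < n, sbar ≤ v → indeg T v = 1) ∧
    (∀ v < n, v < n - sbar → outdeg T v = 1)

/-- The classification `C(T) = (L^T, R^T)` of a legal cover of `L_n`, as a pair of binary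
`s̄`-tuples: `L^T(i)` records whether `indeg_T(i) = 1` and `R^T(i)` whether
`outdeg_T(n−1−i) = 1`. -/
def classif (sbar n : ℕ) (T : Finset (ℕ × ℕ)) :
    (Fin sbar → Bool) × (Fin sbar → Bool) :=
  (fun i => decide (indeg T i.val = 1), fun i => decide (outdeg T (n - 1 - i.val) = 1))

lemma indeg_mono {T T' : Finset (ℕ × ℕ)} (h : T' ⊆ T) (v : ℕ) : indeg T' v ≤ indeg T v :=
  Finset.card_le_card (Finset.filter_subset_filter _ h)

lemma outdeg_mono {T T' : Finset (ℕ × ℕ)} (h : T' ⊆ T) (v : ℕ) : outdeg T' v ≤ outdeg T v :=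
  Finset.card_le_card (Finset.filter_subset_filter _ h)

lemma indeg_sdiff_of_forall_snd_ne {T H : Finset (ℕ × ℕ)} {v : ℕ} (h : ∀ e ∈ H, e.2 ≠ v) :
    indeg (T \ H) v = indeg T v := by
  unfold indeg
  congr 1
  ext e
  simp only [Finset.mem_filter, Finset.mem_sdiff]
  grind

lemma outdeg_sdiff_of_forall_fst_ne {T H : Finset (ℕ × ℕ)} {v : ℕ} (h : ∀ e ∈ H, e.1 ≠ v) :
    outdeg (T \ H) v = outdeg T v := by
  unfold outdeg
  congr 1
  ext e
  simp only [Finset.mem_filter, Finset.mem_sdiff]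
  grind

lemma sdiff_Hook_subset_ELat {S : Finset ℕ} {n : ℕ} {T : Finset (ℕ × ℕ)} (h : T ⊆ ECirc S n) :
    T \ Hook S n ⊆ ELat S n := by
  intro e he
  simp only [Hook, Finset.mem_sdiff, not_and, not_not] at he
  exact he.2 (h he.1)

/-- A hook edge `(i, j)` wraps around, so its jump `j + n - i` is at most `s̄`. -/
lemma mem_Hook_bounds {S : Finset ℕ} {sbar n : ℕ} (hS : ∀ s ∈ S, s ≤ sbar) {e : ℕ × ℕ}
    (he : e ∈ Hook S n) : e.2 < sbar ∧ n ≤ e.1 + sbar := by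
  obtain ⟨i, j⟩ := e
  simp only [Hook, ECirc, ELat, Finset.mem_sdiff, Finset.mem_filter, Finset.mem_product,
    Finset.mem_range, not_and] at he
  obtain ⟨⟨⟨hi, hj⟩, hjump⟩, hnot⟩ := he
  by_cases hij : i ≤ j
  · have hmod : (j + n - i) % n = j - i := by
      rw [show j + n - i = j - i + n by omega, Nat.add_mod_right, Nat.mod_eq_of_lt (by omega)]
    exact absurd (hmod ▸ hjump) (hnot ⟨hi, hj⟩ hij)
  · have := hS _ hjump
    rw [Nat.mod_eq_of_lt (by omega)] at this
    omega

theorem cycleCover_sdiff_hook_legal_general (S : Finset ℕ) (h0 : 0 ∈ S) (sbar : ℕ)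
    (hsbar : sbar = S.max' ⟨0, h0⟩) (n : ℕ)
    (T : Finset (ℕ × ℕ)) (hT : CycleCover S n T) :
    LegalCover S sbar n (T \ Hook S n) := by
  obtain ⟨hTC, hdeg⟩ := hT
  have hS : ∀ s ∈ S, s ≤ sbar := fun s hs => hsbar ▸ S.le_max' s hs
  refine ⟨sdiff_Hook_subset_ELat hTC, fun v hv => ⟨?_, ?_⟩, fun v hv hsv => ?_,
    fun v hv hvs => ?_⟩
  · exact (indeg_mono Finset.sdiff_subset v).trans (hdeg v hv).1.le
  · exact (outdeg_mono Finset.sdiff_subset v).trans (hdeg v hv).2.le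
  · rw [indeg_sdiff_of_forall_snd_ne fun e he => by have := mem_Hook_bounds hS he; omega]
    exact (hdeg v hv).1
  · rw [outdeg_sdiff_of_forall_fst_ne fun e he => by have := mem_Hook_bounds hS he; omega]
    exact (hdeg v hv).2

/-- If `T` is a cycle cover of the circulant graph `C_n` (jump set `S` with
`0 = s_1 < ⋯ < s_k`, `s̄ = s_k`, `n ≥ 2s̄`), then `T \ Hook(n)` is a legal cover
of the lattice graph `L_n`. -/
theorem cycleCover_sdiff_hook_legal (S : Finset ℕ) (h0 : 0 ∈ S) (sbar : ℕ)
    (hsbar : sbar = S.max' ⟨0, h0⟩) (n : ℕ) (hn : 2 * sbar ≤ n)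
    (T : Finset (ℕ × ℕ)) (hT : CycleCover S n T) :
    LegalCover S sbar n (T \ Hook S n) :=
  cycleCover_sdiff_hook_legal_general S h0 sbar hsbar n T hT
end

section
/- Fix integers 0 = s_1 < s_2 < ... < s_k, set S = {s_1,...,s_k} and s̄ = s_k. Let n_1, n_2 ≥ 2s̄, let T_1 be a legal cover of L_{n_1} and T_2 a legal cover of L_{n_2} with C(T_1) = C(T_2). Let P ⊆ { (s,j) : s ∈ S, 1 ≤ j ≤ s }, and for m ∈ {n_1, n_2} set E_m(P) = { (m−j, s−j) : (s,j) ∈ P } ⊆ Hook(m). Then T_1 ∪ E_{n_1}(P) is a cycle cover of C_{n_1} if and only if T_2 ∪ E_{n_2}(P) is a cycle cover of C_{n_2}. -/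
/-!
A Hook-edge `(n − j, s − j)` is not a lattice edge; it leaves one of the last `s̄` vertices and
enters one of the first `s̄`. Away from these two windows a legal cover already has in- and
out-degree `1`, so `T ∪ E_n(P)` is a cycle cover iff the degree equations hold at the `2 s̄`
window vertices. There the degrees of `T` are `0` or `1` and are recorded by `C(T)`, so the
equations only involve `C(T)` and `P`.
-/

open Finset

lemma indeg_union {T E : Finset (ℕ × ℕ)} (h : Disjoint T E) (v : ℕ) :
    indeg (T ∪ E) v = indeg T v + indeg E v := by
  rw [indeg, filter_union, card_union_of_disjoint (disjoint_filter_filter h)]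
  rfl

lemma outdeg_union {T E : Finset (ℕ × ℕ)} (h : Disjoint T E) (v : ℕ) :
    outdeg (T ∪ E) v = outdeg T v + outdeg E v := by
  rw [outdeg, filter_union, card_union_of_disjoint (disjoint_filter_filter h)]
  rfl

lemma disjoint_ELat_Hook (S : Finset ℕ) (n : ℕ) : Disjoint (ELat S n) (Hook S n) :=
  disjoint_sdiff

lemma ELat_subset_ECirc (S : Finset ℕ) (n : ℕ) : ELat S n ⊆ ECirc S n := by
  intro e he
  simp only [ELat, ECirc, mem_filter, mem_product, mem_range] at he ⊢
  obtain ⟨hrange, hle, hS⟩ := he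
  refine ⟨hrange, ?_⟩
  rwa [show e.2 + n - e.1 = e.2 - e.1 + n by omega, Nat.add_mod_right,
    Nat.mod_eq_of_lt (by omega)]

/-- The edge `(n − j, s − j)` of `E_n(P)` indexed by `e = (s, j) ∈ P`. -/
def hookEdge (n : ℕ) (e : ℕ × ℕ) : ℕ × ℕ := (n - e.2, e.1 - e.2)

def hookEdges (n : ℕ) (P : Finset (ℕ × ℕ)) : Finset (ℕ × ℕ) := P.image (hookEdge n)

section hookEdges

variable {S : Finset ℕ} {sbar n : ℕ} {P : Finset (ℕ × ℕ)}

lemma hookEdges_subset_Hook (hP : ∀ e ∈ P, e.1 ∈ S ∧ 1 ≤ e.2 ∧ e.2 ≤ e.1)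
    (hPn : ∀ e ∈ P, e.1 < n) : hookEdges n P ⊆ Hook S n := by
  intro x hx
  obtain ⟨e, he, rfl⟩ := mem_image.1 hx
  obtain ⟨hs, hj, hjs⟩ := hP e he
  have hsn := hPn e he
  simp only [hookEdge, Hook, ECirc, ELat, mem_sdiff, mem_filter, mem_product, mem_range]
  refine ⟨⟨⟨by omega, by omega⟩, ?_⟩, by omega⟩
  rwa [show e.1 - e.2 + n - (n - e.2) = e.1 by omega, Nat.mod_eq_of_lt hsn]

lemma injOn_hookEdge (hP : ∀ e ∈ P, e.2 ≤ e.1 ∧ e.2 ≤ n) : Set.InjOn (hookEdge n) P := by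
  intro a ha b hb hab
  have := hP a ha
  have := hP b hb
  simp only [hookEdge, Prod.mk.injEq] at hab
  ext <;> omega

lemma indeg_hookEdges (hP : ∀ e ∈ P, e.2 ≤ e.1 ∧ e.2 ≤ n) (v : ℕ) :
    indeg (hookEdges n P) v = #{e ∈ P | e.1 - e.2 = v} := by
  rw [indeg, hookEdges, filter_image,
    card_image_of_injOn ((injOn_hookEdge hP).mono (coe_subset.2 (filter_subset _ _)))]
  rfl

lemma outdeg_hookEdges (hP : ∀ e ∈ P, e.2 ≤ e.1 ∧ e.2 ≤ n) {i : ℕ} (hi : i < n) :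
    outdeg (hookEdges n P) (n - 1 - i) = #{e ∈ P | e.2 = i + 1} := by
  rw [outdeg, hookEdges, filter_image,
    card_image_of_injOn ((injOn_hookEdge hP).mono (coe_subset.2 (filter_subset _ _)))]
  congr 1
  refine filter_congr fun e he => ?_
  have := hP e he
  simp only [hookEdge]
  omega

lemma indeg_hookEdges_eq_zero (hP : ∀ e ∈ P, 1 ≤ e.2 ∧ e.2 ≤ e.1 ∧ e.1 ≤ sbar) {v : ℕ}
    (hv : sbar ≤ v) :
    indeg (hookEdges n P) v = 0 := by
  simp only [indeg, hookEdges, hookEdge, card_eq_zero, filter_eq_empty_iff, mem_image]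
  rintro _ ⟨e, he, rfl⟩
  have := hP e he
  omega

lemma outdeg_hookEdges_eq_zero (hP : ∀ e ∈ P, e.2 ≤ sbar) {v : ℕ} (hv : v < n - sbar) :
    outdeg (hookEdges n P) v = 0 := by
  simp only [outdeg, hookEdges, hookEdge, card_eq_zero, filter_eq_empty_iff, mem_image]
  rintro _ ⟨e, he, rfl⟩
  have := hP e he
  omega

end hookEdges

namespace LegalCover

variable {S : Finset ℕ} {sbar n : ℕ} {T P : Finset (ℕ × ℕ)}

lemma indeg_union_hookEdges_eq_one_iff (hT : LegalCover S sbar n T) (hn : sbar ≤ n)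
    (hP : ∀ e ∈ P, 1 ≤ e.2 ∧ e.2 ≤ e.1 ∧ e.1 ≤ sbar) (hd : Disjoint T (hookEdges n P)) :
    (∀ v < n, indeg (T ∪ hookEdges n P) v = 1) ↔
      ∀ i < sbar, indeg T i + #{e ∈ P | e.1 - e.2 = i} = 1 := by
  have hP' : ∀ e ∈ P, e.2 ≤ e.1 ∧ e.2 ≤ n := fun e he => by have := hP e he; omega
  simp only [indeg_union hd]
  refine ⟨fun h i hi => by simpa only [indeg_hookEdges hP'] using h i (by omega),
    fun h v hv => ?_⟩
  rcases lt_or_ge v sbar with hvs | hvs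
  · rw [indeg_hookEdges hP']
    exact h v hvs
  · rw [indeg_hookEdges_eq_zero hP hvs, hT.2.2.1 v hv hvs]

lemma outdeg_union_hookEdges_eq_one_iff (hT : LegalCover S sbar n T) (hn : sbar ≤ n)
    (hP : ∀ e ∈ P, 1 ≤ e.2 ∧ e.2 ≤ e.1 ∧ e.1 ≤ sbar) (hd : Disjoint T (hookEdges n P)) :
    (∀ v < n, outdeg (T ∪ hookEdges n P) v = 1) ↔
      ∀ i < sbar, outdeg T (n - 1 - i) + #{e ∈ P | e.2 = i + 1} = 1 := by
  have hP' : ∀ e ∈ P, e.2 ≤ e.1 ∧ e.2 ≤ n := fun e he => by have := hP e he; omega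
  simp only [outdeg_union hd]
  refine ⟨fun h i hi => by
      simpa only [outdeg_hookEdges hP' (show i < n by omega)] using h (n - 1 - i) (by omega),
    fun h v hv => ?_⟩
  rcases lt_or_ge v (n - sbar) with hvs | hvs
  · rw [outdeg_hookEdges_eq_zero (fun e he => by have := hP e he; omega) hvs,
      hT.2.2.2 v hv hvs]
  · obtain ⟨i, hi, rfl⟩ : ∃ i < sbar, v = n - 1 - i := ⟨n - 1 - v, by omega, by omega⟩
    rw [outdeg_hookEdges hP' (by omega)]
    exact h i hi

lemma cycleCover_union_hookEdges_iff (hT : LegalCover S sbar n T) (hS : ∀ s ∈ S, s ≤ sbar)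
    (hn : 2 * sbar ≤ n) (hP : ∀ e ∈ P, e.1 ∈ S ∧ 1 ≤ e.2 ∧ e.2 ≤ e.1) :
    CycleCover S n (T ∪ hookEdges n P) ↔
      ∀ i < sbar, indeg T i + #{e ∈ P | e.1 - e.2 = i} = 1 ∧
        outdeg T (n - 1 - i) + #{e ∈ P | e.2 = i + 1} = 1 := by
  have hP' : ∀ e ∈ P, 1 ≤ e.2 ∧ e.2 ≤ e.1 ∧ e.1 ≤ sbar :=
    fun e he => ⟨(hP e he).2.1, (hP e he).2.2, hS _ (hP e he).1⟩
  have hHook : hookEdges n P ⊆ Hook S n :=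
    hookEdges_subset_Hook hP fun e he => by have := hP' e he; omega
  have hd : Disjoint T (hookEdges n P) := (disjoint_ELat_Hook S n).mono hT.1 hHook
  have hsub : T ∪ hookEdges n P ⊆ ECirc S n :=
    union_subset (hT.1.trans (ELat_subset_ECirc S n)) (hHook.trans sdiff_subset)
  simp only [CycleCover, hsub, true_and, imp_and, forall_and]
  rw [hT.indeg_union_hookEdges_eq_one_iff (by omega) hP' hd,
    hT.outdeg_union_hookEdges_eq_one_iff (by omega) hP' hd]

variable {n₁ n₂ : ℕ} {T₁ T₂ : Finset (ℕ × ℕ)}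

lemma degrees_eq_of_classif_eq (hT₁ : LegalCover S sbar n₁ T₁) (hT₂ : LegalCover S sbar n₂ T₂)
    (hC : classif sbar n₁ T₁ = classif sbar n₂ T₂) {i : ℕ} (hi : i < sbar)
    (hn₁ : sbar ≤ n₁) (hn₂ : sbar ≤ n₂) :
    indeg T₁ i = indeg T₂ i ∧ outdeg T₁ (n₁ - 1 - i) = outdeg T₂ (n₂ - 1 - i) := by
  have hL := congrFun (congrArg Prod.fst hC) ⟨i, hi⟩
  have hR := congrFun (congrArg Prod.snd hC) ⟨i, hi⟩
  simp only [classif, decide_eq_decide] at hL hR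
  have := (hT₁.2.1 i (by omega)).1
  have := (hT₂.2.1 i (by omega)).1
  have := (hT₁.2.1 (n₁ - 1 - i) (by omega)).2
  have := (hT₂.2.1 (n₂ - 1 - i) (by omega)).2
  omega

end LegalCover

/-- Completing a legal cover to a cycle cover by Hook-edges depends only on the
classification.  Let `T_1, T_2` be legal covers of `L_{n_1}, L_{n_2}` (with `n_1, n_2 ≥ 2s̄`)
having the same classification, and let `P ⊆ {(s,j) : s ∈ S, 1 ≤ j ≤ s}` index a set of
Hook-edges `E_m(P) = {(m−j, s−j) : (s,j) ∈ P}`.  Then `T_1 ∪ E_{n_1}(P)` is a cycle cover of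
`C_{n_1}` iff `T_2 ∪ E_{n_2}(P)` is a cycle cover of `C_{n_2}`. -/
theorem cycleCover_completion_depends_only_on_classif (S : Finset ℕ) (h0 : 0 ∈ S)
    (sbar : ℕ) (hsbar : sbar = S.max' ⟨0, h0⟩) (n1 n2 : ℕ)
    (hn1 : 2 * sbar ≤ n1) (hn2 : 2 * sbar ≤ n2) (T1 T2 : Finset (ℕ × ℕ))
    (hT1 : LegalCover S sbar n1 T1) (hT2 : LegalCover S sbar n2 T2)
    (hC : classif sbar n1 T1 = classif sbar n2 T2)
    (P : Finset (ℕ × ℕ)) (hP : ∀ e ∈ P, e.1 ∈ S ∧ 1 ≤ e.2 ∧ e.2 ≤ e.1) :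
    (CycleCover S n1 (T1 ∪ P.image fun e => (n1 - e.2, e.1 - e.2)) ↔
      CycleCover S n2 (T2 ∪ P.image fun e => (n2 - e.2, e.1 - e.2))) := by
  have hS : ∀ s ∈ S, s ≤ sbar := fun s hs => hsbar ▸ S.le_max' s hs
  change CycleCover S n1 (T1 ∪ hookEdges n1 P) ↔ CycleCover S n2 (T2 ∪ hookEdges n2 P)
  rw [hT1.cycleCover_union_hookEdges_iff hS hn1 hP, hT2.cycleCover_union_hookEdges_iff hS hn2 hP]
  refine forall₂_congr fun i hi => ?_
  obtain ⟨hin, hout⟩ := hT1.degrees_eq_of_classif_eq hT2 hC hi (by omega) (by omega)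
  rw [hin, hout]
end

section
/- Fix integers 0 = s_1 < s_2 < ... < s_k, set S = {s_1,...,s_k} and s̄ = s_k, and let n ≥ 2s̄. Let T be a legal cover of L_n and let S' ⊆ New(n) be such that T ∪ S' is a legal cover of L_{n+1}. Then |S'| = 1. -/
theorem snd_lt_of_mem_ELat {S : Finset ℕ} {n : ℕ} {e : ℕ × ℕ} (he : e ∈ ELat S n) : e.2 < n := by
  simp only [ELat, Finset.mem_filter, Finset.mem_product, Finset.mem_range] at he
  exact he.1.2

theorem snd_eq_of_mem_NewE {S : Finset ℕ} {n : ℕ} {e : ℕ × ℕ} (he : e ∈ NewE S n) :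
    e.2 = n := by
  simp only [NewE, Finset.mem_sdiff, ELat, Finset.mem_filter, Finset.mem_product,
    Finset.mem_range] at he
  obtain ⟨⟨⟨-, hlt⟩, hle, hS⟩, hnot⟩ := he
  by_contra hne
  exact hnot ⟨⟨by omega, by omega⟩, hle, hS⟩

theorem indeg_union_of_forall_snd_ne {T U : Finset (ℕ × ℕ)} {v : ℕ} (hT : ∀ e ∈ T, e.2 ≠ v) :
    indeg (T ∪ U) v = indeg U v := by
  rw [indeg, indeg, Finset.filter_union, Finset.filter_false_of_mem hT, Finset.empty_union]

theorem indeg_eq_card_of_forall_snd_eq {U : Finset (ℕ × ℕ)} {v : ℕ} (hU : ∀ e ∈ U, e.2 = v) :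
    indeg U v = U.card := by
  rw [indeg, Finset.filter_true_of_mem hU]

theorem newEdges_extension_card_one_general (S : Finset ℕ) (sbar : ℕ)
    (n : ℕ) (hn : 2 * sbar ≤ n)
    (T S' : Finset (ℕ × ℕ)) (hT : LegalCover S sbar n T) (hS' : S' ⊆ NewE S n)
    (hTS : LegalCover S sbar (n + 1) (T ∪ S')) :
    S'.card = 1 := by
  have hT_below : ∀ e ∈ T, e.2 ≠ n := fun e he => (snd_lt_of_mem_ELat (hT.1 he)).ne
  have hS'_at : ∀ e ∈ S', e.2 = n := fun e he => snd_eq_of_mem_NewE (hS' he)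
  have hindeg : indeg (T ∪ S') n = 1 := hTS.2.2.1 n n.lt_succ_self (by omega)
  rwa [indeg_union_of_forall_snd_ne hT_below, indeg_eq_card_of_forall_snd_eq hS'_at] at hindeg

/-- If `T` is a legal cover of `L_n` (jump set `S` with `0 = s_1 < ⋯ < s_k`, `s̄ = s_k`,
`n ≥ 2s̄`) and `S' ⊆ New(n)` is such that `T ∪ S'` is a legal cover of `L_{n+1}`,
then `S'` consists of exactly one edge. -/
theorem newEdges_extension_card_one (S : Finset ℕ) (h0 : 0 ∈ S) (sbar : ℕ)
    (hsbar : sbar = S.max' ⟨0, h0⟩) (n : ℕ) (hn : 2 * sbar ≤ n)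
    (T S' : Finset (ℕ × ℕ)) (hT : LegalCover S sbar n T) (hS' : S' ⊆ NewE S n)
    (hTS : LegalCover S sbar (n + 1) (T ∪ S')) :
    S'.card = 1 :=
  newEdges_extension_card_one_general S sbar n hn T S' hT hS' hTS
end

section
/- Fix integers 0 = s_1 < s_2 < ... < s_k, set S = {s_1,...,s_k} and s̄ = s_k, and let n ≥ 2s̄. For a classification X (a pair of binary s̄-tuples), let t_n(X) denote the number of legal covers T of L_n with C(T) = X, and let b(X) denote the number of sets P ⊆ {(s,j) : s ∈ S, 1 ≤ j ≤ s} such that for every legal cover T of L_n with C(T) = X, the set T ∪ {(n−j, s−j) : (s,j) ∈ P} is a cycle cover of C_n. Also let a(X, X') denote the number of subsets S' ⊆ S such that for every legal cover T of L_n with C(T) = X', the set T ∪ {(n−s, n) : s ∈ S'} is a legal cover of L_{n+1} with classification X. Then: (i) the number of cycle covers of C_n equals Σ_X b(X)·t_n(X), and (ii) for every classification X, t_{n+1}(X) = Σ_{X'} a(X, X')·t_n(X'), where both sums range over all 2^{2s̄} classifications. -/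
/-- `t_n(X)`: the number of legal covers of `L_n` with classification `X`. -/
noncomputable def tcount (S : Finset ℕ) (sbar n : ℕ)
    (X : (Fin sbar → Bool) × (Fin sbar → Bool)) : ℕ :=
  Nat.card {T : Finset (ℕ × ℕ) // LegalCover S sbar n T ∧ classif sbar n T = X}

/-- `b(X)`: the number of sets `P ⊆ {(s,j) : s ∈ S, 1 ≤ j ≤ s}` such that adjoining the
corresponding Hook-edges `{(n−j, s−j) : (s,j) ∈ P}` turns every legal cover of
classification `X` into a cycle cover of `C_n`. -/
noncomputable def bcoef (S : Finset ℕ) (sbar n : ℕ)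
    (X : (Fin sbar → Bool) × (Fin sbar → Bool)) : ℕ :=
  Nat.card {P : Finset (ℕ × ℕ) // (∀ e ∈ P, e.1 ∈ S ∧ 1 ≤ e.2 ∧ e.2 ≤ e.1) ∧
    ∀ T : Finset (ℕ × ℕ), LegalCover S sbar n T → classif sbar n T = X →
      CycleCover S n (T ∪ P.image fun e => (n - e.2, e.1 - e.2))}

/-- `a(X, X')`: the number of subsets `S' ⊆ S` such that adjoining the New-edges
`{(n−s, n) : s ∈ S'}` turns every legal cover of `L_n` of classification `X'` into a
legal cover of `L_{n+1}` of classification `X`. -/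
noncomputable def acoef (S : Finset ℕ) (sbar n : ℕ)
    (X X' : (Fin sbar → Bool) × (Fin sbar → Bool)) : ℕ :=
  Nat.card {S' : Finset ℕ // S' ⊆ S ∧
    ∀ T : Finset (ℕ × ℕ), LegalCover S sbar n T → classif sbar n T = X' →
      LegalCover S sbar (n + 1) (T ∪ S'.image fun s => (n - s, n)) ∧
        classif sbar (n + 1) (T ∪ S'.image fun s => (n - s, n)) = X}
attribute [local instance] Classical.propDecidable

open Finset

namespace TMaux

lemma mem_ELat {S : Finset ℕ} {n : ℕ} {e : ℕ × ℕ} :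
    e ∈ ELat S n ↔ e.1 < n ∧ e.2 < n ∧ e.1 ≤ e.2 ∧ e.2 - e.1 ∈ S := by
  simp [ELat, Finset.mem_filter, Finset.mem_product, and_assoc]

lemma mem_ECirc {S : Finset ℕ} {n : ℕ} {e : ℕ × ℕ} :
    e ∈ ECirc S n ↔ e.1 < n ∧ e.2 < n ∧ (e.2 + n - e.1) % n ∈ S := by
  simp [ECirc, Finset.mem_filter, Finset.mem_product, and_assoc]

lemma ELat_subset_ECirc {S : Finset ℕ} {n : ℕ} : ELat S n ⊆ ECirc S n := by
  intro e he
  rw [mem_ELat] at he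
  rw [mem_ECirc]
  obtain ⟨h1, h2, h3, h4⟩ := he
  refine ⟨h1, h2, ?_⟩
  have : e.2 + n - e.1 = (e.2 - e.1) + n := by omega
  rw [this, Nat.add_mod_right, Nat.mod_eq_of_lt (by omega)]
  exact h4

lemma ELat_mono {S : Finset ℕ} {n : ℕ} : ELat S n ⊆ ELat S (n + 1) := by
  intro e he
  rw [mem_ELat] at he ⊢
  exact ⟨by omega, by omega, he.2.2⟩

lemma indeg_union {T E : Finset (ℕ × ℕ)} (h : Disjoint T E) (v : ℕ) :
    indeg (T ∪ E) v = indeg T v + indeg E v := by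
  unfold indeg
  rw [Finset.filter_union, Finset.card_union_of_disjoint
    (Finset.disjoint_filter_filter h)]

lemma outdeg_union {T E : Finset (ℕ × ℕ)} (h : Disjoint T E) (v : ℕ) :
    outdeg (T ∪ E) v = outdeg T v + outdeg E v := by
  unfold outdeg
  rw [Finset.filter_union, Finset.card_union_of_disjoint
    (Finset.disjoint_filter_filter h)]

lemma indeg_zero {S : Finset ℕ} {n : ℕ} {T : Finset (ℕ × ℕ)} (hT : T ⊆ ELat S n)
    {v : ℕ} (hv : n ≤ v) : indeg T v = 0 := by
  unfold indeg
  rw [Finset.card_eq_zero, Finset.filter_eq_empty_iff]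
  intro e he heq
  have := mem_ELat.1 (hT he)
  omega

lemma outdeg_zero {S : Finset ℕ} {n : ℕ} {T : Finset (ℕ × ℕ)} (hT : T ⊆ ELat S n)
    {v : ℕ} (hv : n ≤ v) : outdeg T v = 0 := by
  unfold outdeg
  rw [Finset.card_eq_zero, Finset.filter_eq_empty_iff]
  intro e he heq
  have := mem_ELat.1 (hT he)
  omega

/-- Master lemma: two legal covers with the same classification have the same
in/out-degree at every vertex. -/
lemma deg_eq_of_classif_eq {S : Finset ℕ} {sbar n : ℕ} (hn : 2 * sbar ≤ n)
    {T₁ T₂ : Finset (ℕ × ℕ)} (h₁ : LegalCover S sbar n T₁) (h₂ : LegalCover S sbar n T₂)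
    (hc : classif sbar n T₁ = classif sbar n T₂) (v : ℕ) :
    indeg T₁ v = indeg T₂ v ∧ outdeg T₁ v = outdeg T₂ v := by
  obtain ⟨hs₁, hd₁, hi₁, ho₁⟩ := h₁
  obtain ⟨hs₂, hd₂, hi₂, ho₂⟩ := h₂
  constructor
  · rcases lt_or_ge v sbar with hv | hv
    · have hv' : v < n := by omega
      have e1 := congrFun (congrArg Prod.fst hc) ⟨v, hv⟩
      simp only [classif, decide_eq_decide] at e1
      have d1 := (hd₁ v hv').1
      have d2 := (hd₂ v hv').1
      omega
    · rcases lt_or_ge v n with hv' | hv'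
      · rw [hi₁ v hv' hv, hi₂ v hv' hv]
      · rw [indeg_zero hs₁ hv', indeg_zero hs₂ hv']
  · rcases lt_or_ge v (n - sbar) with hv | hv
    · have hv' : v < n := by omega
      rw [ho₁ v hv' hv, ho₂ v hv' hv]
    · rcases lt_or_ge v n with hv' | hv'
      · have hvs : n - 1 - v < sbar := by omega
        have e1 := congrFun (congrArg Prod.snd hc) ⟨n - 1 - v, hvs⟩
        simp only [classif, decide_eq_decide] at e1
        have hveq : n - 1 - (n - 1 - v) = v := by omega
        rw [hveq] at e1
        have d1 := (hd₁ v hv').2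
        have d2 := (hd₂ v hv').2
        omega
      · rw [outdeg_zero hs₁ hv', outdeg_zero hs₂ hv']

lemma union_deg_eq {S : Finset ℕ} {sbar n : ℕ} (hn : 2 * sbar ≤ n)
    {T₁ T₂ : Finset (ℕ × ℕ)} (h₁ : LegalCover S sbar n T₁) (h₂ : LegalCover S sbar n T₂)
    (hc : classif sbar n T₁ = classif sbar n T₂) {E : Finset (ℕ × ℕ)}
    (hd₁ : Disjoint T₁ E) (hd₂ : Disjoint T₂ E) (v : ℕ) :
    indeg (T₁ ∪ E) v = indeg (T₂ ∪ E) v ∧ outdeg (T₁ ∪ E) v = outdeg (T₂ ∪ E) v := by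
  obtain ⟨e1, e2⟩ := deg_eq_of_classif_eq hn h₁ h₂ hc v
  rw [indeg_union hd₁, indeg_union hd₂, outdeg_union hd₁, outdeg_union hd₂, e1, e2]
  exact ⟨rfl, rfl⟩

end TMaux
namespace TMaux

lemma cycle_transfer {S : Finset ℕ} {sbar n : ℕ} (hn : 2 * sbar ≤ n)
    {T₁ T₂ : Finset (ℕ × ℕ)} (h₁ : LegalCover S sbar n T₁) (h₂ : LegalCover S sbar n T₂)
    (hc : classif sbar n T₁ = classif sbar n T₂) {E : Finset (ℕ × ℕ)}
    (hd₁ : Disjoint T₁ E) (hd₂ : Disjoint T₂ E)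
    (h : CycleCover S n (T₁ ∪ E)) : CycleCover S n (T₂ ∪ E) := by
  obtain ⟨hsub, hdeg⟩ := h
  refine ⟨Finset.union_subset (h₂.1.trans ELat_subset_ECirc)
    (Finset.subset_union_right.trans hsub), fun v hv => ?_⟩
  obtain ⟨e1, e2⟩ := union_deg_eq hn h₁ h₂ hc hd₁ hd₂ v
  rw [← e1, ← e2]
  exact hdeg v hv

lemma legal_transfer {S : Finset ℕ} {sbar n : ℕ} (hn : 2 * sbar ≤ n)
    {T₁ T₂ : Finset (ℕ × ℕ)} (h₁ : LegalCover S sbar n T₁) (h₂ : LegalCover S sbar n T₂)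
    (hc : classif sbar n T₁ = classif sbar n T₂) {E : Finset (ℕ × ℕ)}
    (hd₁ : Disjoint T₁ E) (hd₂ : Disjoint T₂ E)
    {X : (Fin sbar → Bool) × (Fin sbar → Bool)}
    (h : LegalCover S sbar (n + 1) (T₁ ∪ E) ∧ classif sbar (n + 1) (T₁ ∪ E) = X) :
    LegalCover S sbar (n + 1) (T₂ ∪ E) ∧ classif sbar (n + 1) (T₂ ∪ E) = X := by
  obtain ⟨⟨hsub, hdle, hdin, hdout⟩, hclass⟩ := h
  have key := union_deg_eq hn h₁ h₂ hc hd₁ hd₂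
  constructor
  · refine ⟨Finset.union_subset (h₂.1.trans ELat_mono)
      (Finset.subset_union_right.trans hsub), fun v hv => ?_, fun v hv hv' => ?_,
      fun v hv hv' => ?_⟩
    · rw [← (key v).1, ← (key v).2]; exact hdle v hv
    · rw [← (key v).1]; exact hdin v hv hv'
    · rw [← (key v).2]; exact hdout v hv hv'
  · rw [← hclass]
    unfold classif
    refine Prod.ext ?_ ?_ <;>
      (dsimp only; funext i)
    · rw [(key i.val).1]
    · rw [(key (n + 1 - 1 - i.val)).2]

end TMaux
namespace TMaux

attribute [local instance] Classical.propDecidable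

lemma natCard_eq_filter_card {α : Type*} [DecidableEq α] (s : Finset α) (p : α → Prop)
    (h : ∀ t, p t → t ∈ s) : Nat.card {t : α // p t} = (s.filter p).card := by
  rw [Nat.card_congr (Equiv.subtypeEquivRight (q := fun t => t ∈ s.filter p)
    (fun t => by simp only [Finset.mem_filter]; exact ⟨fun hp => ⟨h t hp, hp⟩, fun h => h.2⟩))]
  exact Nat.card_eq_finsetCard _

variable {S : Finset ℕ} {sbar n : ℕ}

/-- The "new" edges attached to a set `S'` of jumps. -/
def NE (n : ℕ) (S' : Finset ℕ) : Finset (ℕ × ℕ) := S'.image fun s => (n - s, n)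

/-- The hook edges attached to a set `P` of pairs. -/
def HE (n : ℕ) (P : Finset (ℕ × ℕ)) : Finset (ℕ × ℕ) := P.image fun e => (n - e.2, e.1 - e.2)

lemma disjoint_NE {T : Finset (ℕ × ℕ)} (hT : T ⊆ ELat S n) (S' : Finset ℕ) :
    Disjoint T (NE n S') := by
  rw [Finset.disjoint_left]
  intro e he hne
  have h1 := mem_ELat.1 (hT he)
  simp only [NE, Finset.mem_image] at hne
  obtain ⟨s, _, rfl⟩ := hne
  exact lt_irrefl n h1.2.1

lemma disjoint_HE (hmax : ∀ s ∈ S, s ≤ sbar) (hn : 2 * sbar ≤ n)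
    {T : Finset (ℕ × ℕ)} (hT : T ⊆ ELat S n)
    {P : Finset (ℕ × ℕ)} (hP : ∀ e ∈ P, e.1 ∈ S ∧ 1 ≤ e.2 ∧ e.2 ≤ e.1) :
    Disjoint T (HE n P) := by
  rw [Finset.disjoint_left]
  intro e he hne
  have h1 := mem_ELat.1 (hT he)
  simp only [HE, Finset.mem_image] at hne
  obtain ⟨a, ha, rfl⟩ := hne
  obtain ⟨ha1, ha2, ha3⟩ := hP a ha
  have := hmax a.1 ha1
  simp at h1
  omega

end TMaux
namespace TMaux

attribute [local instance] Classical.propDecidable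

variable {S : Finset ℕ} {sbar n : ℕ}

lemma recover_T (hmax : ∀ s ∈ S, s ≤ sbar) (hn : 2 * sbar ≤ n)
    {T : Finset (ℕ × ℕ)} (hT : T ⊆ ELat S n) (S' : Finset ℕ) :
    (T ∪ NE n S').filter (fun e => e.2 ≠ n) = T := by
  ext e
  simp only [Finset.mem_filter, Finset.mem_union, NE, Finset.mem_image]
  constructor
  · rintro ⟨he | ⟨s, hs, rfl⟩, hne⟩
    · exact he
    · exact absurd rfl hne
  · intro he
    have := mem_ELat.1 (hT he)
    exact ⟨Or.inl he, by omega⟩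

lemma recover_S' (hmax : ∀ s ∈ S, s ≤ sbar) (hn : 2 * sbar ≤ n)
    {T : Finset (ℕ × ℕ)} (hT : T ⊆ ELat S n) {S' : Finset ℕ} (hS' : S' ⊆ S) :
    ((T ∪ NE n S').filter (fun e => e.2 = n)).image (fun e => n - e.1) = S' := by
  have hfe : (T ∪ NE n S').filter (fun e => e.2 = n) = NE n S' := by
    ext e
    simp only [Finset.mem_filter, Finset.mem_union, NE, Finset.mem_image]
    constructor
    · rintro ⟨he | he, hne⟩
      · have := mem_ELat.1 (hT he); omega
      · exact he
    · rintro ⟨s, hs, rfl⟩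
      exact ⟨Or.inr ⟨s, hs, rfl⟩, rfl⟩
  rw [hfe]
  unfold NE
  rw [Finset.image_image]
  have hcg : ∀ s ∈ (S' : Set ℕ), ((fun e : ℕ × ℕ => n - e.1) ∘ fun s => (n - s, n)) s = id s := by
    intro s hs
    have := hmax s (hS' hs)
    simp only [Function.comp_apply, id_eq]
    omega
  rw [Finset.image_congr hcg, Finset.image_id]

lemma decompose (hmax : ∀ s ∈ S, s ≤ sbar) (hn : 2 * sbar ≤ n)
    {U : Finset (ℕ × ℕ)} (hU : LegalCover S sbar (n + 1) U) :
    ∃ S' T, S' ⊆ S ∧ LegalCover S sbar n T ∧ U = T ∪ NE n S' := by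
  obtain ⟨hsub, hdle, hdin, hdout⟩ := hU
  set S' : Finset ℕ := (U.filter (fun e => e.2 = n)).image (fun e => n - e.1) with hS'def
  set T : Finset (ℕ × ℕ) := U.filter (fun e => e.2 ≠ n) with hTdef
  have hS'S : S' ⊆ S := by
    intro s hs
    simp only [hS'def, Finset.mem_image, Finset.mem_filter] at hs
    obtain ⟨e, ⟨heU, he2⟩, rfl⟩ := hs
    have h1 := mem_ELat.1 (hsub heU)
    have : n - e.1 = e.2 - e.1 := by omega
    rw [this]
    exact h1.2.2.2
  have hNE : NE n S' = U.filter (fun e => e.2 = n) := by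
    rw [hS'def]
    unfold NE
    rw [Finset.image_image]
    refine Eq.trans (Finset.image_congr ?_) (Finset.image_id)
    intro e he
    simp only [Finset.mem_coe, Finset.mem_filter] at he
    have h1 := mem_ELat.1 (hsub he.1)
    have he2 := he.2
    simp only [Function.comp, id]
    have : n - (n - e.1) = e.1 := by omega
    rw [this, ← he2]
  have hTsub : T ⊆ ELat S n := by
    intro e he
    simp only [hTdef, Finset.mem_filter] at he
    have h1 := mem_ELat.1 (hsub he.1)
    rw [mem_ELat]
    refine ⟨by omega, by omega, h1.2.2.1, h1.2.2.2⟩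
  have hTU : T ⊆ U := Finset.filter_subset _ _
  have hindeg : ∀ v, v ≠ n → indeg T v = indeg U v := by
    intro v hv
    unfold indeg
    congr 1
    ext e
    simp only [hTdef, Finset.filter_filter, Finset.mem_filter]
    constructor
    · rintro ⟨h1, _, h3⟩; exact ⟨h1, h3⟩
    · rintro ⟨h1, h2⟩; exact ⟨h1, by omega, h2⟩
  have houtdeg : ∀ v, v + sbar < n → outdeg T v = outdeg U v := by
    intro v hv
    unfold outdeg
    congr 1
    ext e
    simp only [hTdef, Finset.filter_filter, Finset.mem_filter]
    constructor
    · rintro ⟨h1, _, h3⟩; exact ⟨h1, h3⟩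
    · rintro ⟨h1, h2⟩
      refine ⟨h1, ?_, h2⟩
      have hm := mem_ELat.1 (hsub h1)
      have := hmax (e.2 - e.1) hm.2.2.2
      omega
  have houtle : ∀ v, outdeg T v ≤ outdeg U v := by
    intro v
    exact Finset.card_le_card (Finset.filter_subset_filter _ hTU)
  refine ⟨S', T, hS'S, ⟨hTsub, ?_, ?_, ?_⟩, ?_⟩
  · intro v hv
    have h1 := hdle v (by omega)
    rw [hindeg v (by omega)]
    exact ⟨h1.1, le_trans (houtle v) h1.2⟩
  · intro v hv hsv
    rw [hindeg v (by omega)]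
    exact hdin v (by omega) hsv
  · intro v hv hv'
    rw [houtdeg v (by omega)]
    exact hdout v (by omega) (by omega)
  · ext e
    simp only [Finset.mem_union, hTdef, Finset.mem_filter, hNE]
    by_cases h : e.2 = n <;> simp [h] <;> tauto

end TMaux
namespace TMaux

attribute [local instance] Classical.propDecidable

/-- Legal covers of `L_n`. -/
noncomputable def Ball (S : Finset ℕ) (sbar n : ℕ) : Finset (Finset (ℕ × ℕ)) :=
  (ELat S n).powerset.filter (LegalCover S sbar n)

/-- Legal covers of `L_n` with classification `X`. -/
noncomputable def Bset (S : Finset ℕ) (sbar n : ℕ)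
    (X : (Fin sbar → Bool) × (Fin sbar → Bool)) : Finset (Finset (ℕ × ℕ)) :=
  (Ball S sbar n).filter (fun T => classif sbar n T = X)

lemma mem_Ball {S : Finset ℕ} {sbar n : ℕ} {T : Finset (ℕ × ℕ)} :
    T ∈ Ball S sbar n ↔ LegalCover S sbar n T := by
  simp only [Ball, Finset.mem_filter, Finset.mem_powerset]
  exact ⟨fun h => h.2, fun h => ⟨h.1, h⟩⟩

lemma mem_Bset {S : Finset ℕ} {sbar n : ℕ} {X : (Fin sbar → Bool) × (Fin sbar → Bool)}
    {T : Finset (ℕ × ℕ)} :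
    T ∈ Bset S sbar n X ↔ LegalCover S sbar n T ∧ classif sbar n T = X := by
  simp only [Bset, Finset.mem_filter, mem_Ball]

lemma tcount_eq (S : Finset ℕ) (sbar n : ℕ) (X : (Fin sbar → Bool) × (Fin sbar → Bool)) :
    tcount S sbar n X = (Bset S sbar n X).card := by
  unfold tcount
  rw [natCard_eq_filter_card (ELat S n).powerset
    (fun T => LegalCover S sbar n T ∧ classif sbar n T = X)
    (fun T h => Finset.mem_powerset.2 h.1.1)]
  congr 1
  ext T
  simp only [Bset, Ball, Finset.mem_filter, Finset.mem_powerset, and_assoc]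

/-- The condition appearing in `acoef`. -/
abbrev Qpred (S : Finset ℕ) (sbar n : ℕ) (X : (Fin sbar → Bool) × (Fin sbar → Bool))
    (S' : Finset ℕ) (T : Finset (ℕ × ℕ)) : Prop :=
  LegalCover S sbar (n + 1) (T ∪ S'.image fun s => (n - s, n)) ∧
    classif sbar (n + 1) (T ∪ S'.image fun s => (n - s, n)) = X

variable {S : Finset ℕ} {sbar n : ℕ}

lemma partII (h0 : 0 ∈ S) (hsbar : sbar = S.max' ⟨0, h0⟩) (hn : 2 * sbar ≤ n)
    (X : (Fin sbar → Bool) × (Fin sbar → Bool)) :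
    tcount S sbar (n + 1) X =
      ∑ X' : (Fin sbar → Bool) × (Fin sbar → Bool),
        acoef S sbar n X X' * tcount S sbar n X' := by
  have hmax : ∀ s ∈ S, s ≤ sbar := fun s hs => hsbar ▸ S.le_max' s hs
  -- step 1: product formula for each X'
  have step1 : ∀ X' : (Fin sbar → Bool) × (Fin sbar → Bool),
      acoef S sbar n X X' * tcount S sbar n X' =
        ((S.powerset ×ˢ Bset S sbar n X').filter
          (fun p => Qpred S sbar n X p.1 p.2)).card := by
    intro X'
    have hA : acoef S sbar n X X' =
        (S.powerset.filter (fun S' => S' ⊆ S ∧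
          ∀ T : Finset (ℕ × ℕ), LegalCover S sbar n T → classif sbar n T = X' →
            Qpred S sbar n X S' T)).card := by
      unfold acoef
      rw [← Nat.card_eq_finsetCard]
      refine Nat.card_congr (Equiv.subtypeEquivRight fun S' => ?_)
      simp only [Finset.mem_filter, Finset.mem_powerset]
      constructor
      · intro h
        exact ⟨h.1, h⟩
      · exact fun h => h.2
    have hprod : (S.powerset ×ˢ Bset S sbar n X').filter
          (fun p => Qpred S sbar n X p.1 p.2) =
        (S.powerset.filter (fun S' => S' ⊆ S ∧
          ∀ T : Finset (ℕ × ℕ), LegalCover S sbar n T → classif sbar n T = X' →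
            Qpred S sbar n X S' T)) ×ˢ Bset S sbar n X' := by
      ext ⟨S', T⟩
      simp only [Finset.mem_filter, Finset.mem_product, Finset.mem_powerset, mem_Bset]
      constructor
      · rintro ⟨⟨hS', hT⟩, hq⟩
        refine ⟨⟨hS', hS', fun T' hT' hc' => ?_⟩, hT⟩
        exact legal_transfer hn hT.1 hT' (hT.2.trans hc'.symm)
          (disjoint_NE hT.1.1 S') (disjoint_NE hT'.1 S') hq
      · rintro ⟨⟨hS', _, hall⟩, hT⟩
        exact ⟨⟨hS', hT⟩, hall T hT.1 hT.2⟩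
    rw [hA, hprod, tcount_eq, Finset.card_product]
  rw [Finset.sum_congr rfl (fun X' _ => step1 X')]
  -- step 2: fiberwise sum
  have step2 : ∑ X' : (Fin sbar → Bool) × (Fin sbar → Bool),
      ((S.powerset ×ˢ Bset S sbar n X').filter (fun p => Qpred S sbar n X p.1 p.2)).card =
      ((S.powerset ×ˢ Ball S sbar n).filter (fun p => Qpred S sbar n X p.1 p.2)).card := by
    rw [Finset.card_eq_sum_card_fiberwise
      (f := fun p : Finset ℕ × Finset (ℕ × ℕ) => classif sbar n p.2)
      (t := Finset.univ) (fun p _ => Finset.mem_univ _)]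
    refine Finset.sum_congr rfl (fun X' _ => ?_)
    congr 1
    ext ⟨S', T⟩
    simp only [Finset.mem_filter, Finset.mem_product, mem_Bset, mem_Ball]
    tauto
  rw [step2, tcount_eq]
  symm
  -- step 3: bijection with legal covers of L_{n+1} of classification X
  refine Finset.card_bij
    (fun (p : Finset ℕ × Finset (ℕ × ℕ)) _ => p.2 ∪ p.1.image fun s => (n - s, n)) ?_ ?_ ?_
  · rintro ⟨S', T⟩ hp
    simp only [Finset.mem_filter, Finset.mem_product] at hp
    exact mem_Bset.2 hp.2
  · rintro ⟨S₁, T₁⟩ h1 ⟨S₂, T₂⟩ h2 heq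
    simp only [Finset.mem_filter, Finset.mem_product, Finset.mem_powerset, mem_Ball] at h1 h2
    have r1T := recover_T hmax hn h1.1.2.1 S₁
    have r2T := recover_T hmax hn h2.1.2.1 S₂
    have r1S := recover_S' hmax hn h1.1.2.1 h1.1.1
    have r2S := recover_S' hmax hn h2.1.2.1 h2.1.1
    have heq' : T₁ ∪ NE n S₁ = T₂ ∪ NE n S₂ := heq
    have e1 : T₁ = T₂ := by rw [← r1T, ← r2T, heq']
    have e2 : S₁ = S₂ := by rw [← r1S, ← r2S, heq']
    rw [Prod.mk.injEq]
    exact ⟨e2, e1⟩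
  · intro U hU
    rw [mem_Bset] at hU
    obtain ⟨S', T, hS', hT, hUeq⟩ := decompose hmax hn hU.1
    have hne : T ∪ (S'.image fun s => (n - s, n)) = U := hUeq.symm
    refine ⟨⟨S', T⟩, ?_, hne⟩
    simp only [Finset.mem_filter, Finset.mem_product, Finset.mem_powerset, mem_Ball]
    refine ⟨⟨hS', hT⟩, ?_, ?_⟩
    · rw [hne]; exact hU.1
    · rw [hne]; exact hU.2

end TMaux
namespace TMaux

attribute [local instance] Classical.propDecidable

variable {S : Finset ℕ} {sbar n : ℕ}

lemma HE_pred (hmax : ∀ s ∈ S, s ≤ sbar) (hn : 2 * sbar ≤ n)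
    {P : Finset (ℕ × ℕ)} (hP : ∀ e ∈ P, e.1 ∈ S ∧ 1 ≤ e.2 ∧ e.2 ≤ e.1)
    {e : ℕ × ℕ} (he : e ∈ HE n P) : ¬ e.1 ≤ e.2 := by
  simp only [HE, Finset.mem_image] at he
  obtain ⟨a, ha, rfl⟩ := he
  obtain ⟨ha1, ha2, ha3⟩ := hP a ha
  have := hmax a.1 ha1
  simp only
  omega

lemma recoverC_T (hmax : ∀ s ∈ S, s ≤ sbar) (hn : 2 * sbar ≤ n)
    {T : Finset (ℕ × ℕ)} (hT : T ⊆ ELat S n)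
    {P : Finset (ℕ × ℕ)} (hP : ∀ e ∈ P, e.1 ∈ S ∧ 1 ≤ e.2 ∧ e.2 ≤ e.1) :
    (T ∪ HE n P).filter (fun e => e.1 ≤ e.2) = T := by
  ext e
  simp only [Finset.mem_filter, Finset.mem_union]
  constructor
  · rintro ⟨he | he, hle⟩
    · exact he
    · exact absurd hle (HE_pred hmax hn hP he)
  · intro he
    exact ⟨Or.inl he, (mem_ELat.1 (hT he)).2.2.1⟩

lemma recoverC_P (hmax : ∀ s ∈ S, s ≤ sbar) (hn : 2 * sbar ≤ n)
    {T : Finset (ℕ × ℕ)} (hT : T ⊆ ELat S n)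
    {P : Finset (ℕ × ℕ)} (hP : ∀ e ∈ P, e.1 ∈ S ∧ 1 ≤ e.2 ∧ e.2 ≤ e.1) :
    ((T ∪ HE n P).filter (fun e => ¬ e.1 ≤ e.2)).image
      (fun e => (e.2 + n - e.1, n - e.1)) = P := by
  have hfe : (T ∪ HE n P).filter (fun e => ¬ e.1 ≤ e.2) = HE n P := by
    ext e
    simp only [Finset.mem_filter, Finset.mem_union]
    constructor
    · rintro ⟨he | he, hle⟩
      · exact absurd (mem_ELat.1 (hT he)).2.2.1 hle
      · exact he
    · intro he
      exact ⟨Or.inr he, HE_pred hmax hn hP he⟩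
  rw [hfe]
  unfold HE
  rw [Finset.image_image]
  have hcg : ∀ a ∈ (P : Set (ℕ × ℕ)),
      ((fun e : ℕ × ℕ => (e.2 + n - e.1, n - e.1)) ∘ fun e => (n - e.2, e.1 - e.2)) a
        = id a := by
    intro a ha
    obtain ⟨ha1, ha2, ha3⟩ := hP a ha
    have := hmax a.1 ha1
    simp only [Function.comp_apply, id_eq]
    have h1 : a.1 - a.2 + n - (n - a.2) = a.1 := by omega
    have h2 : n - (n - a.2) = a.2 := by omega
    rw [h1, h2]
  rw [Finset.image_congr hcg, Finset.image_id]

lemma decomposeC (hmax : ∀ s ∈ S, s ≤ sbar) (hn : 2 * sbar ≤ n)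
    {U : Finset (ℕ × ℕ)} (hU : CycleCover S n U) :
    ∃ P T, (∀ e ∈ P, e.1 ∈ S ∧ 1 ≤ e.2 ∧ e.2 ≤ e.1) ∧ LegalCover S sbar n T ∧
      U = T ∪ HE n P := by
  obtain ⟨hsub, hdeg⟩ := hU
  set P : Finset (ℕ × ℕ) :=
    (U.filter (fun e => ¬ e.1 ≤ e.2)).image (fun e => (e.2 + n - e.1, n - e.1)) with hPdef
  set T : Finset (ℕ × ℕ) := U.filter (fun e => e.1 ≤ e.2) with hTdef
  -- basic facts about hook-type edges of U
  have hhook : ∀ e ∈ U, ¬ e.1 ≤ e.2 →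
      e.2 + n - e.1 ∈ S ∧ e.2 + n - e.1 ≤ sbar ∧ 1 ≤ n - e.1 ∧ n - e.1 ≤ e.2 + n - e.1 := by
    intro e he hle
    have h1 := mem_ECirc.1 (hsub he)
    have hd : (e.2 + n - e.1) % n = e.2 + n - e.1 := Nat.mod_eq_of_lt (by omega)
    rw [hd] at h1
    have := hmax _ h1.2.2
    exact ⟨h1.2.2, this, by omega, by omega⟩
  have hP : ∀ e ∈ P, e.1 ∈ S ∧ 1 ≤ e.2 ∧ e.2 ≤ e.1 := by
    intro e he
    simp only [hPdef, Finset.mem_image, Finset.mem_filter] at he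
    obtain ⟨a, ⟨haU, hale⟩, rfl⟩ := he
    obtain ⟨q1, q2, q3, q4⟩ := hhook a haU hale
    exact ⟨q1, q3, q4⟩
  have hHE : HE n P = U.filter (fun e => ¬ e.1 ≤ e.2) := by
    rw [hPdef]
    unfold HE
    rw [Finset.image_image]
    refine Eq.trans (Finset.image_congr ?_) (Finset.image_id)
    intro e he
    simp only [Finset.mem_coe, Finset.mem_filter] at he
    obtain ⟨heU, hele⟩ := he
    have h1 := mem_ECirc.1 (hsub heU)
    simp only [Function.comp_apply, id_eq]
    have c1 : n - (n - e.1) = e.1 := by omega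
    have c2 : e.2 + n - e.1 - (n - e.1) = e.2 := by omega
    rw [c1, c2]
  have hTsub : T ⊆ ELat S n := by
    intro e he
    simp only [hTdef, Finset.mem_filter] at he
    have h1 := mem_ECirc.1 (hsub he.1)
    rw [mem_ELat]
    refine ⟨h1.1, h1.2.1, he.2, ?_⟩
    have : e.2 + n - e.1 = (e.2 - e.1) + n := by omega
    rw [this, Nat.add_mod_right, Nat.mod_eq_of_lt (by omega)] at h1
    exact h1.2.2
  have hTU : T ⊆ U := Finset.filter_subset _ _
  have hinle : ∀ v, indeg T v ≤ indeg U v :=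
    fun v => Finset.card_le_card (Finset.filter_subset_filter _ hTU)
  have houtle : ∀ v, outdeg T v ≤ outdeg U v :=
    fun v => Finset.card_le_card (Finset.filter_subset_filter _ hTU)
  have hindeg : ∀ v, sbar ≤ v → indeg T v = indeg U v := by
    intro v hv
    unfold indeg
    congr 1
    ext e
    simp only [hTdef, Finset.filter_filter, Finset.mem_filter]
    constructor
    · rintro ⟨h1, _, h3⟩; exact ⟨h1, h3⟩
    · rintro ⟨h1, h2⟩
      refine ⟨h1, ?_, h2⟩
      by_contra hle
      obtain ⟨q1, q2, q3, q4⟩ := hhook e h1 hle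
      omega
  have houtdeg : ∀ v, v < n - sbar → outdeg T v = outdeg U v := by
    intro v hv
    unfold outdeg
    congr 1
    ext e
    simp only [hTdef, Finset.filter_filter, Finset.mem_filter]
    constructor
    · rintro ⟨h1, _, h3⟩; exact ⟨h1, h3⟩
    · rintro ⟨h1, h2⟩
      refine ⟨h1, ?_, h2⟩
      by_contra hle
      obtain ⟨q1, q2, q3, q4⟩ := hhook e h1 hle
      have := mem_ECirc.1 (hsub h1)
      omega
  refine ⟨P, T, hP, ⟨hTsub, ?_, ?_, ?_⟩, ?_⟩
  · intro v hv
    obtain ⟨d1, d2⟩ := hdeg v hv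
    exact ⟨by rw [← d1]; exact hinle v, by rw [← d2]; exact houtle v⟩
  · intro v hv hsv
    rw [hindeg v hsv]
    exact (hdeg v hv).1
  · intro v hv hv'
    rw [houtdeg v hv']
    exact (hdeg v hv).2
  · ext e
    simp only [Finset.mem_union, hTdef, Finset.mem_filter, hHE]
    by_cases h : e.1 ≤ e.2 <;> simp [h] <;> tauto

end TMaux
namespace TMaux

attribute [local instance] Classical.propDecidable

variable {S : Finset ℕ} {sbar n : ℕ}

/-- The admissible hook pairs. -/
noncomputable def Pairs (S : Finset ℕ) (sbar : ℕ) : Finset (ℕ × ℕ) :=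
  (S ×ˢ Finset.range (sbar + 1)).filter (fun e => 1 ≤ e.2 ∧ e.2 ≤ e.1)

lemma mem_Pairs (hmax : ∀ s ∈ S, s ≤ sbar) {e : ℕ × ℕ} :
    e ∈ Pairs S sbar ↔ e.1 ∈ S ∧ 1 ≤ e.2 ∧ e.2 ≤ e.1 := by
  simp only [Pairs, Finset.mem_filter, Finset.mem_product, Finset.mem_range]
  constructor
  · rintro ⟨⟨h1, _⟩, h2⟩; exact ⟨h1, h2⟩
  · rintro ⟨h1, h2, h3⟩
    have := hmax e.1 h1
    exact ⟨⟨h1, by omega⟩, h2, h3⟩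

set_option maxHeartbeats 1600000 in
lemma partI (h0 : 0 ∈ S) (hsbar : sbar = S.max' ⟨0, h0⟩) (hn : 2 * sbar ≤ n) :
    Nat.card {T : Finset (ℕ × ℕ) // CycleCover S n T} =
      ∑ X : (Fin sbar → Bool) × (Fin sbar → Bool),
        bcoef S sbar n X * tcount S sbar n X := by
  have hmax : ∀ s ∈ S, s ≤ sbar := fun s hs => hsbar ▸ S.le_max' s hs
  -- step 1: product formula for each X
  have step1 : ∀ X : (Fin sbar → Bool) × (Fin sbar → Bool),
      bcoef S sbar n X * tcount S sbar n X =
        (((Pairs S sbar).powerset ×ˢ Bset S sbar n X).filter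
          (fun p => CycleCover S n (p.2 ∪ p.1.image fun e => (n - e.2, e.1 - e.2)))).card := by
    intro X
    have hB : bcoef S sbar n X =
        ((Pairs S sbar).powerset.filter (fun P =>
          (∀ e ∈ P, e.1 ∈ S ∧ 1 ≤ e.2 ∧ e.2 ≤ e.1) ∧
          ∀ T : Finset (ℕ × ℕ), LegalCover S sbar n T → classif sbar n T = X →
            CycleCover S n (T ∪ P.image fun e => (n - e.2, e.1 - e.2)))).card := by
      unfold bcoef
      rw [← Nat.card_eq_finsetCard]
      refine Nat.card_congr (Equiv.subtypeEquivRight fun P => ?_)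
      simp only [Finset.mem_filter, Finset.mem_powerset]
      constructor
      · intro h
        exact ⟨fun e he => (mem_Pairs hmax).2 (h.1 e he), h⟩
      · exact fun h => h.2
    have hprod : ((Pairs S sbar).powerset ×ˢ Bset S sbar n X).filter
          (fun p => CycleCover S n (p.2 ∪ p.1.image fun e => (n - e.2, e.1 - e.2))) =
        ((Pairs S sbar).powerset.filter (fun P =>
          (∀ e ∈ P, e.1 ∈ S ∧ 1 ≤ e.2 ∧ e.2 ≤ e.1) ∧
          ∀ T : Finset (ℕ × ℕ), LegalCover S sbar n T → classif sbar n T = X →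
            CycleCover S n (T ∪ P.image fun e => (n - e.2, e.1 - e.2))))
          ×ˢ Bset S sbar n X := by
      ext ⟨P, T⟩
      simp only [Finset.mem_filter, Finset.mem_product, Finset.mem_powerset, mem_Bset]
      constructor
      · rintro ⟨⟨hPs, hT⟩, hq⟩
        have hPp : ∀ e ∈ P, e.1 ∈ S ∧ 1 ≤ e.2 ∧ e.2 ≤ e.1 :=
          fun e he => (mem_Pairs hmax).1 (hPs he)
        refine ⟨⟨hPs, hPp, fun T' hT' hc' => ?_⟩, hT⟩
        exact cycle_transfer hn hT.1 hT' (hT.2.trans hc'.symm)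
          (disjoint_HE hmax hn hT.1.1 hPp) (disjoint_HE hmax hn hT'.1 hPp) hq
      · rintro ⟨⟨hPs, _, hall⟩, hT⟩
        exact ⟨⟨hPs, hT⟩, hall T hT.1 hT.2⟩
    rw [hB, hprod, tcount_eq, Finset.card_product]
  rw [Finset.sum_congr rfl (fun X _ => step1 X)]
  -- step 2: fiberwise sum
  have step2 : ∑ X : (Fin sbar → Bool) × (Fin sbar → Bool),
      (((Pairs S sbar).powerset ×ˢ Bset S sbar n X).filter
        (fun p => CycleCover S n (p.2 ∪ p.1.image fun e => (n - e.2, e.1 - e.2)))).card =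
      (((Pairs S sbar).powerset ×ˢ Ball S sbar n).filter
        (fun p => CycleCover S n (p.2 ∪ p.1.image fun e => (n - e.2, e.1 - e.2)))).card := by
    rw [Finset.card_eq_sum_card_fiberwise
      (f := fun p : Finset (ℕ × ℕ) × Finset (ℕ × ℕ) => classif sbar n p.2)
      (t := Finset.univ) (fun p _ => Finset.mem_univ _)]
    refine Finset.sum_congr rfl (fun X _ => ?_)
    congr 1
    ext ⟨P, T⟩
    simp only [Finset.mem_filter, Finset.mem_product, mem_Bset, mem_Ball]
    tauto
  rw [step2]
  -- convert the cycle-cover count to a Finset card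
  rw [(natCard_eq_filter_card (α := Finset (ℕ × ℕ)) (ECirc S n).powerset
    (CycleCover S n) (fun T h => Finset.mem_powerset.2 h.1))]
  symm
  -- step 3: bijection
  refine Finset.card_bij
    (fun (p : Finset (ℕ × ℕ) × Finset (ℕ × ℕ)) _ =>
      p.2 ∪ p.1.image fun e => (n - e.2, e.1 - e.2)) ?_ ?_ ?_
  · rintro ⟨P, T⟩ hp
    simp only [Finset.mem_filter, Finset.mem_product] at hp
    simp only [Finset.mem_filter, Finset.mem_powerset]
    exact ⟨hp.2.1, hp.2⟩
  · rintro ⟨P₁, T₁⟩ h1 ⟨P₂, T₂⟩ h2 heq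
    simp only [Finset.mem_filter, Finset.mem_product, Finset.mem_powerset, mem_Ball] at h1 h2
    have hp1 : ∀ e ∈ P₁, e.1 ∈ S ∧ 1 ≤ e.2 ∧ e.2 ≤ e.1 :=
      fun e he => (mem_Pairs hmax).1 (h1.1.1 he)
    have hp2 : ∀ e ∈ P₂, e.1 ∈ S ∧ 1 ≤ e.2 ∧ e.2 ≤ e.1 :=
      fun e he => (mem_Pairs hmax).1 (h2.1.1 he)
    have r1T := recoverC_T hmax hn h1.1.2.1 hp1
    have r2T := recoverC_T hmax hn h2.1.2.1 hp2
    have r1P := recoverC_P hmax hn h1.1.2.1 hp1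
    have r2P := recoverC_P hmax hn h2.1.2.1 hp2
    have heq' : T₁ ∪ HE n P₁ = T₂ ∪ HE n P₂ := heq
    have e1 : T₁ = T₂ := by rw [← r1T, ← r2T, heq']
    have e2 : P₁ = P₂ := by rw [← r1P, ← r2P, heq']
    rw [Prod.mk.injEq]
    exact ⟨e2, e1⟩
  · intro U hU
    simp only [Finset.mem_filter, Finset.mem_powerset] at hU
    obtain ⟨P, T, hP, hT, hUeq⟩ := decomposeC hmax hn hU.2
    have hne : T ∪ (P.image fun e => (n - e.2, e.1 - e.2)) = U := hUeq.symm
    refine ⟨⟨P, T⟩, ?_, hne⟩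
    simp only [Finset.mem_filter, Finset.mem_product, Finset.mem_powerset, mem_Ball]
    refine ⟨⟨fun e he => (mem_Pairs hmax).2 (hP e he), hT⟩, ?_⟩
    rw [hne]
    exact hU.2

end TMaux

/-- **Transfer-matrix identities for cycle covers of circulant graphs.**
For a jump set `S` with `0 = s_1 < ⋯ < s_k`, `s̄ = s_k` and `n ≥ 2s̄`:
(i) the number of cycle covers of `C_n` equals `Σ_X b(X)·t_n(X)`, and
(ii) `t_{n+1}(X) = Σ_{X'} a(X, X')·t_n(X')`, the sums ranging over all `2^{2s̄}`
classifications. -/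
theorem cycleCover_transfer_matrix (S : Finset ℕ) (h0 : 0 ∈ S) (sbar : ℕ)
    (hsbar : sbar = S.max' ⟨0, h0⟩) (n : ℕ) (hn : 2 * sbar ≤ n) :
    (Nat.card {T : Finset (ℕ × ℕ) // CycleCover S n T} =
        ∑ X : (Fin sbar → Bool) × (Fin sbar → Bool),
          bcoef S sbar n X * tcount S sbar n X) ∧
      (∀ X : (Fin sbar → Bool) × (Fin sbar → Bool),
        tcount S sbar (n + 1) X =
          ∑ X' : (Fin sbar → Bool) × (Fin sbar → Bool),
            acoef S sbar n X X' * tcount S sbar n X') := by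
  exact ⟨TMaux.partI h0 hsbar hn, fun X => TMaux.partII h0 hsbar hn X⟩
end

section
/- Fix integers 0 = s_1 < s_2 < ... < s_k, set S = {s_1,...,s_k} and s̄ = s_k, and let n ≥ 2s̄. Let T be a legal cover of L_n and let S' ⊆ New(n) be such that T ∪ S' is a legal cover of L_{n+1}. Then the number of indices 0 ≤ i < s̄ with R^{T∪S'}(i) = 0 equals the number of indices 0 ≤ i < s̄ with R^T(i) = 0; that is, adding New-edges preserves the number of zeros in the right classification. -/
/-!
Vertex `n` needs an in-edge in `L_{n+1}` and `T` has none, so `S'` is a single edge `(a, n)`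
with `s = n - a ≤ s̄`, and `T` leaves `a` without out-edge. Index the vertices
`n, n - 1, …, n - s̄` by `i ↦ n - i`. The out-degree zeros of `T ∪ {(a, n)}` among them are
those of `T` except `i = s`. Both counts in the theorem are this window count for `T` minus
one: for `T` the window drops `n` (always a zero of `T`), for `T ∪ {(a, n)}` it drops `n - s̄`
(never a zero, by legality in `L_{n+1}`).
-/

open Finset

namespace Nat

theorem card_filter_univ_fin_eq_count (p : ℕ → Prop) [DecidablePred p] (k : ℕ) :
    #{i : Fin k | p i} = count p k := by
  rw [count_eq_card_filter_range, card_filter, card_filter,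
    Fin.sum_univ_eq_sum_range (fun i => if p i then 1 else 0)]

theorem count_add_one_of_iff_and_ne {p q : ℕ → Prop} [DecidablePred p] [DecidablePred q]
    {m s : ℕ} (hs : s < m) (hp : p s) (hq : ∀ i < m, q i ↔ p i ∧ i ≠ s) :
    count q m + 1 = count p m := by
  have hfilter : {i ∈ range m | q i} = {i ∈ range m | p i}.erase s := by
    ext i
    simp only [mem_filter, mem_erase, mem_range]
    constructor
    · rintro ⟨hi, hqi⟩
      exact ⟨((hq i hi).1 hqi).2, hi, ((hq i hi).1 hqi).1⟩
    · rintro ⟨hne, hi, hpi⟩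
      exact ⟨hi, (hq i hi).2 ⟨hpi, hne⟩⟩
  rw [count_eq_card_filter_range, count_eq_card_filter_range, hfilter,
    card_erase_add_one (mem_filter.2 ⟨mem_range.2 hs, hp⟩)]

end Nat

theorem indeg_union_of_disjoint {A B : Finset (ℕ × ℕ)} (h : Disjoint A B) (v : ℕ) :
    indeg (A ∪ B) v = indeg A v + indeg B v := by
  rw [indeg, filter_union, card_union_of_disjoint (disjoint_filter_filter h), indeg, indeg]

theorem outdeg_union_of_disjoint {A B : Finset (ℕ × ℕ)} (h : Disjoint A B) (v : ℕ) :
    outdeg (A ∪ B) v = outdeg A v + outdeg B v := by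
  rw [outdeg, filter_union, card_union_of_disjoint (disjoint_filter_filter h), outdeg, outdeg]

theorem outdeg_singleton (e : ℕ × ℕ) (v : ℕ) : outdeg {e} v = if e.1 = v then 1 else 0 := by
  rw [outdeg, filter_singleton]
  split_ifs <;> rfl

section LatticeCovers

variable {S : Finset ℕ} {n : ℕ} {T S' : Finset (ℕ × ℕ)}

theorem mem_NewE {e : ℕ × ℕ} : e ∈ NewE S n ↔ e.2 = n ∧ e.1 ≤ n ∧ n - e.1 ∈ S := by
  obtain ⟨a, b⟩ := e
  simp only [NewE, ELat, mem_sdiff, mem_filter, mem_product, mem_range]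
  constructor
  · rintro ⟨⟨⟨ha, hb⟩, hab, hS⟩, hold⟩
    obtain rfl : b = n := by
      by_contra hbn
      exact hold ⟨⟨by omega, by omega⟩, hab, hS⟩
    exact ⟨rfl, hab, hS⟩
  · rintro ⟨rfl, hab, hS⟩
    exact ⟨⟨⟨by omega, by omega⟩, hab, hS⟩, fun h => by omega⟩

theorem indeg_eq_zero_of_subset_ELat (hT : T ⊆ ELat S n) {v : ℕ} (hv : n ≤ v) :
    indeg T v = 0 := by
  refine card_eq_zero.2 (filter_eq_empty_iff.2 fun e he hev => ?_)
  have := hT he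
  simp only [ELat, mem_filter, mem_product, mem_range] at this
  omega

theorem outdeg_eq_zero_of_subset_ELat (hT : T ⊆ ELat S n) {v : ℕ} (hv : n ≤ v) :
    outdeg T v = 0 := by
  refine card_eq_zero.2 (filter_eq_empty_iff.2 fun e he hev => ?_)
  have := hT he
  simp only [ELat, mem_filter, mem_product, mem_range] at this
  omega

theorem disjoint_of_subset_NewE (hT : T ⊆ ELat S n) (hS' : S' ⊆ NewE S n) : Disjoint T S' :=
  disjoint_sdiff_self_right.mono hT hS'

theorem exists_eq_singleton_of_legalCover_union {sbar : ℕ} (hT : T ⊆ ELat S n)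
    (hS' : S' ⊆ NewE S n) (hsn : sbar ≤ n)
    (hTS : LegalCover S sbar (n + 1) (T ∪ S')) : ∃ a ≤ n, n - a ∈ S ∧ S' = {(a, n)} := by
  have hdisj := disjoint_of_subset_NewE hT hS'
  have hindeg : indeg S' n = 1 := by
    have := hTS.2.2.1 n (by omega) hsn
    rwa [indeg_union_of_disjoint hdisj, indeg_eq_zero_of_subset_ELat hT le_rfl, zero_add] at this
  rw [indeg, filter_eq_self.2 fun e he => (mem_NewE.1 (hS' he)).1] at hindeg
  obtain ⟨⟨a, b⟩, rfl⟩ := card_eq_one.1 hindeg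
  obtain ⟨rfl, han, haS⟩ := mem_NewE.1 (hS' (mem_singleton_self _))
  exact ⟨a, han, haS, rfl⟩

end LatticeCovers

/-- Adding New-edges preserves the number of zeros in the right classification:
if `T` is a legal cover of `L_n` (`n ≥ 2s̄`) and `S' ⊆ New(n)` is such that `T ∪ S'` is a
legal cover of `L_{n+1}`, then the number of indices `i < s̄` with
`R^{T∪S'}(i) = 0` (i.e. `outdeg_{T∪S'}((n+1)−1−i) = 0`) equals the number of indices
`i < s̄` with `R^T(i) = 0` (i.e. `outdeg_T(n−1−i) = 0`). -/
theorem new_edges_preserve_right_zero_count (S : Finset ℕ) (h0 : 0 ∈ S) (sbar : ℕ)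
    (hsbar : sbar = S.max' ⟨0, h0⟩) (n : ℕ) (hn : 2 * sbar ≤ n)
    (T S' : Finset (ℕ × ℕ)) (hT : LegalCover S sbar n T) (hS' : S' ⊆ NewE S n)
    (hTS : LegalCover S sbar (n + 1) (T ∪ S')) :
    (Finset.univ.filter fun i : Fin sbar => outdeg (T ∪ S') (n - i.val) = 0).card =
      (Finset.univ.filter fun i : Fin sbar => outdeg T (n - 1 - i.val) = 0).card := by
  obtain ⟨a, han, haS, rfl⟩ := exists_eq_singleton_of_legalCover_union hT.1 hS' (by omega) hTS
  set U := T ∪ {(a, n)}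
  have hout (v : ℕ) : outdeg U v = outdeg T v + if a = v then 1 else 0 := by
    rw [outdeg_union_of_disjoint (disjoint_of_subset_NewE hT.1 hS'), outdeg_singleton]
  have hTa : outdeg T a = 0 := by simpa [hout] using (hTS.2.1 a (by omega)).2
  have hUsbar : outdeg U (n - sbar) = 1 := hTS.2.2.2 _ (by omega) (by omega)
  have has : n - a ≤ sbar := hsbar ▸ S.le_max' _ haS
  have hU := Nat.count_succ_eq_count (p := fun i => outdeg U (n - i) = 0) (n := sbar)
    (by simp only [hUsbar, one_ne_zero, not_false_eq_true])
  have hUT := Nat.count_add_one_of_iff_and_ne (p := fun i => outdeg T (n - i) = 0)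
    (q := fun i => outdeg U (n - i) = 0) (m := sbar + 1) (s := n - a) (by omega)
    (by simpa [Nat.sub_sub_self han] using hTa) fun i hi => by grind
  have hT' : Nat.count (fun i => outdeg T (n - i) = 0) (sbar + 1) =
      Nat.count (fun i => outdeg T (n - 1 - i) = 0) sbar + 1 := by
    rw [Nat.count_succ', Nat.sub_zero, if_pos (outdeg_eq_zero_of_subset_ELat hT.1 le_rfl)]
    simp only [Nat.sub_sub, Nat.add_comm 1]
  rw [Nat.card_filter_univ_fin_eq_count (fun i => outdeg U (n - i) = 0),
    Nat.card_filter_univ_fin_eq_count (fun i => outdeg T (n - 1 - i) = 0)]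
  omega
end

section
/- Fix integers p ≥ 1, 0 ≤ s < p, k ≥ 1, and p_1,...,p_k, s_1,...,s_k with 0 ≤ p_i < p and s_i ≥ s for all i; set s̄ = max_i s_i. Then for all n ≥ 2s̄, Hook(n) ⊆ R(n) × L(n), where L(n) = {(u,v) : 0 ≤ u ≤ p−1, 0 ≤ v ≤ s̄−1} and R(n) = {(u,v) : 0 ≤ u ≤ p−2, n−s̄ ≤ v ≤ n−1} ∪ {(p−1,v) : n+s−s̄ ≤ v ≤ n+s−1}; that is, every edge of Hook(n) goes from a vertex of R(n) to a vertex of L(n). -/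
/-- The vertex set `V̂(n) = {(u,v) : 0 ≤ u ≤ p−2, 0 ≤ v ≤ n−1} ∪ {(p−1,v) : 0 ≤ v ≤ n+s−1}`. -/
def memVhat (p s n : ℕ) (x : ℕ × ℕ) : Prop :=
  (x.1 + 2 ≤ p ∧ x.2 < n) ∨ (x.1 + 1 = p ∧ x.2 < n + s)

/-- The circulant edge relation `Ê_C(n)`: both endpoints lie in `V̂(n)` and, with
`f(n;u,v) = u·n + v`, for some jump index `i` one has
`f(n;u_2,v_2) − f(n;u_1,v_1) ≡ p_i·n + s_i (mod pn+s)`. -/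
def EChat (p s k : ℕ) (pv sv : Fin k → ℕ) (n : ℕ) (e : (ℕ × ℕ) × (ℕ × ℕ)) : Prop :=
  memVhat p s n e.1 ∧ memVhat p s n e.2 ∧ ∃ i : Fin k,
    ((e.2.1 * n + e.2.2 : ℤ) - (e.1.1 * n + e.1.2 : ℤ)) ≡
      ((pv i : ℤ) * n + (sv i : ℤ)) [ZMOD ((p : ℤ) * n + s)]

/-- The lattice edge relation `Ê_L(n)`: as `Ê_C(n)`, but in addition for the same jump
index `i` one requires `u_2 − u_1 ≡ p_i (mod p)`. -/
def ELhat (p s k : ℕ) (pv sv : Fin k → ℕ) (n : ℕ) (e : (ℕ × ℕ) × (ℕ × ℕ)) : Prop :=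
  memVhat p s n e.1 ∧ memVhat p s n e.2 ∧ ∃ i : Fin k,
    (((e.2.1 * n + e.2.2 : ℤ) - (e.1.1 * n + e.1.2 : ℤ)) ≡
      ((pv i : ℤ) * n + (sv i : ℤ)) [ZMOD ((p : ℤ) * n + s)]) ∧
    ((e.2.1 : ℤ) - (e.1.1 : ℤ)) ≡ (pv i : ℤ) [ZMOD (p : ℤ)]

/-- `L(n) = {(u,v) : 0 ≤ u ≤ p−1, 0 ≤ v ≤ s̄−1}`. -/
def memLhat (p sbar : ℕ) (x : ℕ × ℕ) : Prop :=
  x.1 < p ∧ x.2 < sbar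

/-- `R(n) = {(u,v) : 0 ≤ u ≤ p−2, n−s̄ ≤ v ≤ n−1} ∪ {(p−1,v) : n+s−s̄ ≤ v ≤ n+s−1}`. -/
def memRhat (p s sbar n : ℕ) (x : ℕ × ℕ) : Prop :=
  (x.1 + 2 ≤ p ∧ n - sbar ≤ x.2 ∧ x.2 < n) ∨
    (x.1 + 1 = p ∧ n + s - sbar ≤ x.2 ∧ x.2 < n + s)

private lemma mulBound (c N R : ℤ) (hN : 1 ≤ N) (h : c * N = R)
    (h1 : -(2*N) < R) (h2 : R < 2*N) : c = -1 ∨ c = 0 ∨ c = 1 := by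
  rcases le_or_gt c (-2) with h3 | h3
  · exfalso
    have := mul_le_mul_of_nonneg_right h3 (by linarith : (0:ℤ) ≤ N)
    linarith
  rcases le_or_gt 2 c with h4 | h4
  · exfalso
    have := mul_le_mul_of_nonneg_right h4 (by linarith : (0:ℤ) ≤ N)
    linarith
  omega

/-- Every Hook edge (`Hook(n) = Ê_C(n) \ Ê_L(n)`) goes from a vertex of `R(n)` to a vertex
of `L(n)`, for all `n ≥ 2s̄` (with `s̄ = max_i s_i`). -/
theorem hookHat_subset (p s k : ℕ) (hp : 1 ≤ p) (hs : s < p) (hk : 1 ≤ k)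
    (pv sv : Fin k → ℕ) (hpv : ∀ i, pv i < p) (hsv : ∀ i, s ≤ sv i)
    (sbar : ℕ) (hsbar : sbar = Finset.univ.sup sv) :
    ∀ n : ℕ, 2 * sbar ≤ n → ∀ e : (ℕ × ℕ) × (ℕ × ℕ),
      EChat p s k pv sv n e → ¬ ELhat p s k pv sv n e →
        memRhat p s sbar n e.1 ∧ memLhat p sbar e.2 := by
  intro n hn e hEC hnEL
  obtain ⟨⟨u1, v1⟩, u2, v2⟩ := e
  obtain ⟨hV1, hV2, i, hcong⟩ := hEC
  have hnd : ¬ ((u2 : ℤ) - (u1 : ℤ)) ≡ (pv i : ℤ) [ZMOD (p : ℤ)] :=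
    fun h => hnEL ⟨hV1, hV2, i, hcong, h⟩
  have hsvi : sv i ≤ sbar := hsbar ▸ Finset.le_sup (Finset.mem_univ i)
  have hsi := hsv i
  have hpi := hpv i
  simp only [memVhat] at hV1 hV2
  -- dispatch n = 0
  rcases Nat.eq_zero_or_pos n with h0 | hn1
  · exfalso; omega
  -- the divisibility coming from the congruence
  obtain ⟨t, ht⟩ := Int.ModEq.dvd hcong
  -- basic product bounds
  have hNpos : (0:ℤ) < (n:ℤ) := by exact_mod_cast hn1
  have hm : (1:ℤ) ≤ (p:ℤ) * n + s := by
    have h1 : (n:ℤ) ≤ (p:ℤ) * n :=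
      le_mul_of_one_le_left (by positivity) (by exact_mod_cast hp)
    have : (0:ℤ) ≤ (s:ℤ) := by positivity
    linarith
  have hf : ∀ u v : ℕ, ((u + 2 ≤ p ∧ v < n) ∨ (u + 1 = p ∧ v < n + s)) →
      (0:ℤ) ≤ (u:ℤ) * n + v ∧ (u:ℤ) * n + v ≤ (p:ℤ) * n + s - 1 := by
    intro u v hV
    refine ⟨by positivity, ?_⟩
    rcases hV with ⟨h1, h2⟩ | ⟨h1, h2⟩
    · have hu : (u:ℤ) ≤ (p:ℤ) - 2 := by omega
      have := mul_le_mul_of_nonneg_right hu (le_of_lt hNpos)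
      have hv : (v:ℤ) ≤ (n:ℤ) - 1 := by omega
      have hs0 : (0:ℤ) ≤ (s:ℤ) := by positivity
      linarith
    · have hu : (u:ℤ) = (p:ℤ) - 1 := by omega
      rw [hu]
      have hv : (v:ℤ) ≤ (n:ℤ) + s - 1 := by omega
      linarith
  have hf1 := hf u1 v1 hV1
  have hf2 := hf u2 v2 hV2
  have hjump : (0:ℤ) ≤ (pv i : ℤ) * n + sv i ∧
      (pv i : ℤ) * n + sv i ≤ (p:ℤ) * n + s - 1 := by
    refine ⟨by positivity, ?_⟩
    have hu : (pv i : ℤ) ≤ (p:ℤ) - 1 := by omega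
    have := mul_le_mul_of_nonneg_right hu (le_of_lt hNpos)
    have hsb1 : (sbar:ℤ) ≤ (n:ℤ) - 1 := by omega
    have hsv1 : (sv i : ℤ) ≤ (sbar:ℤ) := by omega
    have hs0 : (0:ℤ) ≤ (s:ℤ) := by positivity
    linarith
  -- bound the multiplier t
  have ht01 : t = 0 ∨ t = 1 := by
    rcases le_or_gt t (-1) with h3 | h3
    · exfalso
      have := mul_le_mul_of_nonneg_left h3 (by linarith : (0:ℤ) ≤ (p:ℤ) * n + s)
      linarith
    rcases le_or_gt 2 t with h4 | h4
    · exfalso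
      have := mul_le_mul_of_nonneg_left h4 (by linarith : (0:ℤ) ≤ (p:ℤ) * n + s)
      linarith
    omega
  rcases ht01 with rfl | rfl
  · -- no wrap-around: f₂ - f₁ = pᵢ n + sᵢ
    have hE : ((u2:ℤ) - u1 - pv i) * n = (v1:ℤ) + sv i - v2 := by linear_combination -ht
    have hc := mulBound _ _ _ (by omega) hE (by omega) (by omega)
    rcases hc with hc | hc | hc
    · -- c = -1 : impossible
      exfalso
      rw [hc] at hE
      omega
    · -- c = 0 : lattice edge, contradiction
      exfalso
      exact hnd (Int.modEq_iff_dvd.mpr ⟨0, by linarith⟩)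
    · -- c = 1 : hook edge conclusion
      rw [hc] at hE
      simp only [memRhat, memLhat]
      omega
  · -- wrap-around: f₂ - f₁ = pᵢ n + sᵢ - (pn + s)
    have hE : ((u2:ℤ) - u1 - pv i + p) * n = (v1:ℤ) + sv i - s - v2 := by
      linear_combination -ht
    have hc := mulBound _ _ _ (by omega) hE (by omega) (by omega)
    rcases hc with hc | hc | hc
    · -- c = -1 : impossible
      exfalso
      rw [hc] at hE
      omega
    · -- c = 0 : lattice edge, contradiction
      exfalso
      exact hnd (Int.modEq_iff_dvd.mpr ⟨1, by linarith⟩)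
    · -- c = 1 : hook edge conclusion
      rw [hc] at hE
      simp only [memRhat, memLhat]
      omega
end
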